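/- arXiv:1210.4408 — 8 statements merged into one kernel-verified Lean document; each statement's English description precedes it below -/
import Mathlib

section
/- Let n and k be natural numbers with n ≥ k ≥ 2. If (n choose k) · 2^(1 - k(k-1)/2) < 1, then there exists a simple graph G on the vertex set Fin n that is k-Ramsey, i.e., neither G nor its complement contains a clique of size k. -/
/-!
Erdős' probabilistic lower bound, as a count. Colour the pairs of vertices with two colours. For a
fixed `k`-set `s`, the colourings that are constant on the `k.choose 2` pairs inside `s` number
`2 · 2 ^ (N - k.choose 2)` out of `2 ^ N`, so if `2 · n.choose k < 2 ^ k.choose 2` the union of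
these bad sets over all `k`-sets misses some colouring. Taking its first colour class as the
graph, no `k`-set is a clique in it or in its complement.
-/

/-- A simple graph is `k`-Ramsey if it has no clique of size `k` and no
independent set of size `k`, i.e. neither the graph nor its complement
contains a `k`-clique. -/
def IsRamsey {V : Type*} (G : SimpleGraph V) (k : ℕ) : Prop :=
  G.CliqueFree k ∧ Gᶜ.CliqueFree k

open Finset

theorem card_filter_forall_mem_apply_eq {α β : Type*} [Fintype α] [DecidableEq α]
    [Fintype β] [DecidableEq β] (T : Finset α) (b : β) :
    #{c : α → β | ∀ e ∈ T, c e = b} = Fintype.card β ^ (Fintype.card α - #T) := by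
  have : ({c : α → β | ∀ e ∈ T, c e = b} : Finset _) =
      Fintype.piFinset (fun e => if e ∈ T then {b} else univ) := by
    ext c
    simp only [mem_filter, mem_univ, true_and, Fintype.mem_piFinset]
    refine forall_congr' fun e => ?_
    split_ifs with he <;> simp [he]
  rw [this, Fintype.card_piFinset, ← card_compl, compl_eq_univ_sdiff]
  simp [apply_ite card, prod_ite, filter_not]

theorem pow_mul_card_filter_forall_mem_apply_eq_le {α β : Type*} [Fintype α] [DecidableEq α]
    [Fintype β] [DecidableEq β] [Nonempty β] {C : ℕ} {T : Finset α} (hT : C ≤ #T) (b : β) :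
    Fintype.card β ^ C * #{c : α → β | ∀ e ∈ T, c e = b} ≤
      Fintype.card β ^ Fintype.card α := by
  rw [card_filter_forall_mem_apply_eq, ← Nat.sub_add_cancel (card_le_univ T), pow_add,
    Nat.add_sub_cancel, mul_comm (_ ^ _)]
  gcongr
  exact Fintype.card_pos

theorem exists_coloring_forall_exists_ne {α β ι : Type*} [Fintype α] [DecidableEq α]
    [Fintype β] [DecidableEq β] [Nonempty β] (I : Finset ι) (T : ι → Finset α) {C : ℕ}
    (hT : ∀ i ∈ I, C ≤ #(T i)) (h : Fintype.card β * #I < Fintype.card β ^ C) :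
    ∃ c : α → β, ∀ i ∈ I, ∀ b, ∃ e ∈ T i, c e ≠ b := by
  set q := Fintype.card β
  set bad := I.biUnion fun i => univ.biUnion fun b => {c : α → β | ∀ e ∈ T i, c e = b}
  have hbad : q ^ C * #bad < q ^ C * q ^ Fintype.card α := calc
    q ^ C * #bad ≤ ∑ i ∈ I, ∑ b, q ^ C * #{c : α → β | ∀ e ∈ T i, c e = b} := by
      simp only [← mul_sum]
      gcongr
      exact card_biUnion_le.trans (sum_le_sum fun i _ => card_biUnion_le)
    _ ≤ ∑ i ∈ I, ∑ _b : β, q ^ Fintype.card α := by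
      gcongr with i hi b
      exact pow_mul_card_filter_forall_mem_apply_eq_le (hT i hi) b
    _ < q ^ C * q ^ Fintype.card α := by
      rw [sum_const, sum_const, card_univ, smul_eq_mul, smul_eq_mul, ← mul_assoc, mul_comm #I]
      exact Nat.mul_lt_mul_of_pos_right h (by positivity)
  obtain ⟨c, -, hc⟩ := exists_mem_notMem_of_card_lt_card (s := bad) (t := univ)
    (by simpa [Fintype.card_fun] using lt_of_mul_lt_mul_left' hbad)
  refine ⟨c, fun i hi b => ?_⟩
  simp only [bad, mem_biUnion, mem_univ, mem_filter, true_and, not_exists, not_and,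
    not_forall] at hc
  simpa using hc i hi b

namespace SimpleGraph

variable {V : Type*}

theorem compl_fromEdgeSet (E : Set (Sym2 V)) : (fromEdgeSet E)ᶜ = fromEdgeSet Eᶜ := by
  ext v w
  simp only [compl_adj, fromEdgeSet_adj, Set.mem_compl_iff]
  tauto

theorem cliqueFree_fromEdgeSet {E : Set (Sym2 V)} {k : ℕ}
    (h : ∀ s : Finset V, #s = k → ∃ a ∈ s, ∃ b ∈ s, a ≠ b ∧ s(a, b) ∉ E) :
    (fromEdgeSet E).CliqueFree k := by
  intro s hs
  obtain ⟨a, ha, b, hb, hab, hE⟩ := h s hs.card_eq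
  exact hE ((fromEdgeSet_adj _).1 (hs.isClique ha hb hab)).1

end SimpleGraph

open SimpleGraph in
theorem exists_isRamsey_of_two_mul_choose_lt {V : Type*} [Fintype V] [DecidableEq V] (k : ℕ)
    (h : 2 * (Fintype.card V).choose k < 2 ^ k.choose 2) : ∃ G : SimpleGraph V, IsRamsey G k := by
  obtain ⟨c, hc⟩ := exists_coloring_forall_exists_ne (α := Sym2 V) (β := Bool)
    (univ.powersetCard k) (fun s => s.offDiag.image Sym2.mk.uncurry)
    (fun s hs => (Sym2.card_image_offDiag s).trans_ge (by rw [mem_powersetCard_univ.1 hs]))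
    (by simpa using h)
  have hfree (b : Bool) : (fromEdgeSet {e | c e = b}).CliqueFree k :=
    cliqueFree_fromEdgeSet fun s hs => by
      obtain ⟨_, he, hne⟩ := hc s (mem_powersetCard_univ.2 hs) b
      obtain ⟨⟨x, y⟩, hxy, rfl⟩ := mem_image.1 he
      rw [mem_offDiag] at hxy
      exact ⟨x, hxy.1, y, hxy.2.1, hxy.2.2, hne⟩
  refine ⟨fromEdgeSet {e | c e = true}, hfree true, ?_⟩
  rw [compl_fromEdgeSet]
  simpa [Set.compl_ofPred] using hfree false

theorem exists_ramsey_graph_general (n k : ℕ)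
    (h : (n.choose k : ℝ) * (2 : ℝ) ^ ((1 : ℤ) - (k * (k - 1) / 2 : ℕ)) < 1) :
    ∃ G : SimpleGraph (Fin n), IsRamsey G k := by
  rw [← Nat.choose_two_right, zpow_sub₀ two_ne_zero, zpow_one, zpow_natCast, mul_div_assoc',
    div_lt_one (by positivity), mul_comm] at h
  have key : 2 * n.choose k < 2 ^ k.choose 2 := by exact_mod_cast h
  exact exists_isRamsey_of_two_mul_choose_lt k (by simpa using key)

/-- If `(n choose k) · 2^(1 - k(k-1)/2) < 1` then there is a `k`-Ramsey
graph on `n` vertices. -/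
theorem exists_ramsey_graph (n k : ℕ) (hk : 2 ≤ k) (hn : k ≤ n)
    (h : (n.choose k : ℝ) * (2 : ℝ) ^ ((1 : ℤ) - (k * (k - 1) / 2 : ℕ)) < 1) :
    ∃ G : SimpleGraph (Fin n), IsRamsey G k :=
  exists_ramsey_graph_general n k h
end

section
/- Let n and k be natural numbers with n ≥ k ≥ 2. Identify graphs on the vertex set {1,…,n} with subsets of the set of unordered pairs of distinct elements of {1,…,n}. Then the number of such graphs that contain a clique of size k or an independent set of size k is at most (n choose k) · 2^(1 - k(k-1)/2) · 2^(n(n-1)/2). -/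
/-!
Union bound over the `k`-sets `S`: a graph in which `S` is a clique contains the `k.choose 2`
pairs inside `S`, and one in which `S` is independent avoids them, so each of the two events
leaves only the remaining pairs free and has `2 ^ (n.choose 2 - k.choose 2)` outcomes.
-/

open Finset

/-- The set of unordered pairs of distinct elements of the vertex set `Fin n`,
modelled as 2-element subsets. -/
def pairsOf (n : ℕ) : Finset (Finset (Fin n)) :=
  Finset.univ.powersetCard 2

/-- `S` is a clique in the graph with edge set `E`: every pair from `S` is an edge. -/
def IsCliqueIn (n : ℕ) (E : Finset (Finset (Fin n))) (S : Finset (Fin n)) : Prop :=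
  ∀ p ∈ pairsOf n, p ⊆ S → p ∈ E

/-- `S` is an independent set in the graph with edge set `E`: no pair from `S` is an edge. -/
def IsIndepIn (n : ℕ) (E : Finset (Finset (Fin n))) (S : Finset (Fin n)) : Prop :=
  ∀ p ∈ pairsOf n, p ⊆ S → p ∉ E

namespace Finset

theorem card_filter_exists_le_sum {α ι : Type*} (s : Finset α) (t : Finset ι) (p : ι → α → Prop)
    [∀ i, DecidablePred (p i)] [DecidablePred fun x => ∃ i ∈ t, p i x] :
    #{x ∈ s | ∃ i ∈ t, p i x} ≤ ∑ i ∈ t, #{x ∈ s | p i x} := by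
  classical
  calc #{x ∈ s | ∃ i ∈ t, p i x} ≤ #(t.biUnion fun i => {x ∈ s | p i x}) := by
        refine card_le_card fun x hx => ?_
        obtain ⟨hxs, i, hi, hpx⟩ := mem_filter.1 hx
        exact mem_biUnion.2 ⟨i, hi, mem_filter.2 ⟨hxs, hpx⟩⟩
    _ ≤ _ := card_biUnion_le

variable {α : Type*} [DecidableEq α]

theorem filter_powerset_disjoint (U P : Finset α) :
    {E ∈ U.powerset | Disjoint P E} = (U \ P).powerset := by
  ext E
  simp only [mem_filter, mem_powerset, subset_sdiff, disjoint_comm]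

theorem card_filter_powerset_superset {U P : Finset α} (hP : P ⊆ U) :
    #{E ∈ U.powerset | P ⊆ E} = 2 ^ #(U \ P) := by
  rw [← card_powerset]
  refine card_nbij' (· \ P) (· ∪ P) ?_ ?_ ?_ ?_
  · intro E hE
    simp only [coe_filter, mem_powerset, Set.mem_ofPred_eq, mem_coe] at hE ⊢
    exact sdiff_subset_sdiff hE.1 le_rfl
  · intro F hF
    simp only [coe_filter, mem_powerset, Set.mem_ofPred_eq, mem_coe] at hF ⊢
    exact ⟨union_subset (hF.trans sdiff_subset) hP, subset_union_right⟩
  · intro E hE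
    simp only [coe_filter, Set.mem_ofPred_eq] at hE
    exact sdiff_union_of_subset hE.2
  · intro F hF
    simp only [coe_powerset, Set.mem_preimage, Set.mem_powerset_iff, coe_subset] at hF
    exact union_sdiff_cancel_right (disjoint_of_subset_left hF disjoint_sdiff_self_left)

theorem two_pow_card_mul_card_filter_superset_or_disjoint_le {U P : Finset α} (hP : P ⊆ U) :
    2 ^ #P * #{E ∈ U.powerset | P ⊆ E ∨ Disjoint P E} ≤ 2 * 2 ^ #U := by
  have hsplit : 2 ^ #P * 2 ^ #(U \ P) = 2 ^ #U := by
    rw [← pow_add, add_comm, card_sdiff_add_card_eq_card hP]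
  calc 2 ^ #P * #{E ∈ U.powerset | P ⊆ E ∨ Disjoint P E}
      ≤ 2 ^ #P * (#{E ∈ U.powerset | P ⊆ E} + #{E ∈ U.powerset | Disjoint P E}) := by
        rw [filter_or]
        exact Nat.mul_le_mul_left _ (card_union_le _ _)
    _ = 2 * 2 ^ #U := by
        rw [card_filter_powerset_superset hP, filter_powerset_disjoint, card_powerset, ← two_mul,
          mul_left_comm, hsplit]

end Finset

theorem powersetCard_two_subset_pairsOf {n : ℕ} (S : Finset (Fin n)) :
    S.powersetCard 2 ⊆ pairsOf n :=
  powersetCard_mono (subset_univ S)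

theorem isCliqueIn_iff {n : ℕ} {E : Finset (Finset (Fin n))} {S : Finset (Fin n)} :
    IsCliqueIn n E S ↔ S.powersetCard 2 ⊆ E := by
  simp [IsCliqueIn, pairsOf, subset_iff, mem_powersetCard, and_comm]

theorem isIndepIn_iff {n : ℕ} {E : Finset (Finset (Fin n))} {S : Finset (Fin n)} :
    IsIndepIn n E S ↔ Disjoint (S.powersetCard 2) E := by
  simp only [IsIndepIn, pairsOf, disjoint_left, mem_powersetCard, subset_univ, true_and]
  exact ⟨fun h p hp => h p hp.2 hp.1, fun h p hp hpS => h ⟨hpS, hp⟩⟩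

theorem card_pairsOf (n : ℕ) : #(pairsOf n) = n.choose 2 := by
  simp [pairsOf]

theorem two_pow_mul_card_cliqueIn_or_indepIn_le {n : ℕ} (S : Finset (Fin n))
    [DecidablePred fun E => IsCliqueIn n E S ∨ IsIndepIn n E S] :
    2 ^ (#S).choose 2 * #{E ∈ (pairsOf n).powerset | IsCliqueIn n E S ∨ IsIndepIn n E S}
      ≤ 2 * 2 ^ n.choose 2 := by
  simpa [isCliqueIn_iff, isIndepIn_iff, card_pairsOf] using
    two_pow_card_mul_card_filter_superset_or_disjoint_le (powersetCard_two_subset_pairsOf S)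

theorem two_pow_mul_card_exists_cliqueIn_or_indepIn_le (n k : ℕ)
    [DecidablePred fun E => ∃ S : Finset (Fin n), #S = k ∧ (IsCliqueIn n E S ∨ IsIndepIn n E S)] :
    2 ^ k.choose 2 * #{E ∈ (pairsOf n).powerset |
      ∃ S : Finset (Fin n), #S = k ∧ (IsCliqueIn n E S ∨ IsIndepIn n E S)}
        ≤ n.choose k * (2 * 2 ^ n.choose 2) := by
  classical
  calc _ = 2 ^ k.choose 2 * #{E ∈ (pairsOf n).powerset |
        ∃ S ∈ univ.powersetCard k, IsCliqueIn n E S ∨ IsIndepIn n E S} := by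
        congr 2
        simp only [mem_powersetCard, subset_univ, true_and]
    _ ≤ ∑ S ∈ univ.powersetCard k, 2 ^ k.choose 2 *
        #{E ∈ (pairsOf n).powerset | IsCliqueIn n E S ∨ IsIndepIn n E S} := by
        rw [← mul_sum]
        gcongr
        convert card_filter_exists_le_sum _ _ _
    _ ≤ ∑ _S ∈ univ.powersetCard k, 2 * 2 ^ n.choose 2 := by
        refine sum_le_sum fun S hS => ?_
        rw [← (mem_powersetCard.1 hS).2]
        exact two_pow_mul_card_cliqueIn_or_indepIn_le S
    _ = n.choose k * (2 * 2 ^ n.choose 2) := by simp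

open Classical in
theorem count_non_ramsey_graphs_le_general (n k : ℕ) :
    ((((pairsOf n).powerset).filter
        (fun E => ∃ S : Finset (Fin n), S.card = k ∧
          (IsCliqueIn n E S ∨ IsIndepIn n E S))).card : ℝ) ≤
      (n.choose k : ℝ) * (2 : ℝ) ^ ((1 : ℤ) - (k * (k - 1) / 2 : ℕ)) *
        (2 : ℝ) ^ (n * (n - 1) / 2) := by
  rw [← Nat.choose_two_right, ← Nat.choose_two_right, zpow_sub₀ two_ne_zero, zpow_natCast,
    zpow_one, ← mul_le_mul_iff_of_pos_left (by positivity : (0 : ℝ) < 2 ^ k.choose 2)]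
  calc _ ≤ ((n.choose k * (2 * 2 ^ n.choose 2) : ℕ) : ℝ) := by
        exact_mod_cast two_pow_mul_card_exists_cliqueIn_or_indepIn_le n k
    _ = _ := by field_simp; push_cast; ring

open Classical in
/-- The number of graphs on `n` vertices (subsets of the set of unordered pairs of
distinct vertices) containing a clique of size `k` or an independent set of size `k`
is at most `(n choose k) · 2^(1 - k(k-1)/2) · 2^(n(n-1)/2)`. -/
theorem count_non_ramsey_graphs_le (n k : ℕ) (hk : 2 ≤ k) (hn : k ≤ n) :
    ((((pairsOf n).powerset).filter
        (fun E => ∃ S : Finset (Fin n), S.card = k ∧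
          (IsCliqueIn n E S ∨ IsIndepIn n E S))).card : ℝ) ≤
      (n.choose k : ℝ) * (2 : ℝ) ^ ((1 : ℤ) - (k * (k - 1) / 2 : ℕ)) *
        (2 : ℝ) ^ (n * (n - 1) / 2) :=
  count_non_ramsey_graphs_le_general n k
end

section
/- Define k(n) = ⌈2·log₂ n⌉ for natural numbers n ≥ 2. Then the sequence (n choose k(n)) · 2^(1 - k(n)(k(n)-1)/2) tends to 0 as n tends to infinity. -/
open Filter

lemma aux_bound (n : ℕ) (hn : 2 ≤ n) :
    (n.choose ⌈2 * Real.logb 2 n⌉₊ : ℝ) *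
      (2 : ℝ) ^ ((1 : ℤ) -
        (⌈2 * Real.logb 2 n⌉₊ * (⌈2 * Real.logb 2 n⌉₊ - 1) / 2 : ℕ)) ≤ 4 / n := by
  set k : ℕ := ⌈2 * Real.logb 2 n⌉₊ with hk
  set m : ℕ := k * (k - 1) / 2 with hm
  have hN0 : (0:ℝ) < (n:ℝ) := by positivity
  have hN1 : (1:ℝ) < (n:ℝ) := by exact_mod_cast hn.trans_lt' one_lt_two
  have hlog1 : (1:ℝ) ≤ Real.logb 2 n := by
    rw [show (1:ℝ) = Real.logb 2 2 by simp]
    exact Real.logb_le_logb_of_le one_lt_two (by norm_num) (by exact_mod_cast hn)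
  have hklog : 2 * Real.logb 2 n ≤ (k:ℝ) := Nat.le_ceil _
  have hk2 : 2 ≤ k := by
    have : (2:ℝ) ≤ (k:ℝ) := le_trans (by linarith) hklog
    exact_mod_cast this
  have hk1 : 1 ≤ k := le_trans (by norm_num) hk2
  -- m * 2 = k * (k-1)
  have hme : (m:ℝ) * 2 = (k:ℝ) * ((k:ℝ) - 1) := by
    have heven : 2 ∣ k * (k - 1) := (Nat.even_mul_pred_self k).two_dvd
    have : m * 2 = k * (k - 1) := Nat.div_mul_cancel heven
    have := congrArg (Nat.cast : ℕ → ℝ) this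
    push_cast [Nat.cast_sub hk1] at this
    linarith
  -- n^2 ≤ 2^k
  have hrpow : ∀ x : ℝ, (2:ℝ) ^ (Real.logb 2 n * x) = (n:ℝ) ^ x := by
    intro x
    rw [Real.rpow_mul (by norm_num), Real.rpow_logb (by norm_num) (by norm_num) hN0]
  have hn2 : (n:ℝ) ^ 2 ≤ (2:ℝ) ^ k := by
    have h1 : (2:ℝ) ^ (Real.logb 2 n * (2:ℝ)) ≤ (2:ℝ) ^ ((k:ℝ)) :=
      Real.rpow_le_rpow_left_iff one_lt_two |>.mpr (by linarith)
    rw [hrpow, Real.rpow_natCast] at h1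
    calc (n:ℝ) ^ 2 = (n:ℝ) ^ ((2:ℕ):ℝ) := by rw [Real.rpow_natCast]
      _ ≤ (2:ℝ) ^ k := by exact_mod_cast h1
  -- n^(k-1) ≤ 2^m
  have hnk1 : (n:ℝ) ^ (k - 1) ≤ (2:ℝ) ^ m := by
    have hexp : Real.logb 2 n * ((k:ℝ) - 1) ≤ (m:ℝ) := by
      have hkk1 : (0:ℝ) ≤ (k:ℝ) - 1 := by
        have : (1:ℝ) ≤ (k:ℝ) := by exact_mod_cast hk1
        linarith
      have := mul_le_mul_of_nonneg_right (show Real.logb 2 n ≤ (k:ℝ)/2 by linarith) hkk1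
      nlinarith
    have h1 : (2:ℝ) ^ (Real.logb 2 n * ((k:ℝ) - 1)) ≤ (2:ℝ) ^ ((m:ℝ)) :=
      Real.rpow_le_rpow_left_iff one_lt_two |>.mpr hexp
    rw [hrpow, Real.rpow_natCast] at h1
    have hcast : ((k:ℝ) - 1) = ((k - 1 : ℕ) : ℝ) := by
      rw [Nat.cast_sub hk1]; push_cast; ring
    rw [hcast, Real.rpow_natCast] at h1
    exact h1
  -- choose bound: choose * k! ≤ n^k
  have hchoose : (n.choose k : ℝ) * (k.factorial : ℝ) ≤ (n:ℝ) ^ k := by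
    have h := (Nat.descFactorial_le_pow n k)
    rw [Nat.descFactorial_eq_factorial_mul_choose] at h
    have : (k.factorial * n.choose k : ℕ) ≤ (n ^ k : ℕ) := h
    exact_mod_cast le_of_eq_of_le (by push_cast; ring) (Nat.cast_le.mpr this)
  -- 2^(k-1) ≤ k!
  have hfac : (2:ℝ) ^ (k - 1) ≤ (k.factorial : ℝ) := by
    have h : 2 ^ (k - 1) ≤ (1 + (k - 1)).factorial := by
      simpa using @Nat.factorial_mul_pow_le_factorial 1 (k - 1)
    rw [show 1 + (k - 1) = k by omega] at h
    exact_mod_cast h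
  -- main: n * choose ≤ 2 * 2^m
  have hfacpos : (0:ℝ) < (k.factorial : ℝ) := by positivity
  have hmain : (n:ℝ) * (n.choose k : ℝ) ≤ 2 * (2:ℝ) ^ m := by
    have key : (n:ℝ) * (n.choose k : ℝ) * (k.factorial : ℝ)
        ≤ (2 * (2:ℝ) ^ m) * (k.factorial : ℝ) := by
      calc (n:ℝ) * (n.choose k : ℝ) * (k.factorial : ℝ)
          = (n:ℝ) * ((n.choose k : ℝ) * (k.factorial : ℝ)) := by ring
        _ ≤ (n:ℝ) * (n:ℝ) ^ k := by
            exact mul_le_mul_of_nonneg_left hchoose (le_of_lt hN0)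
        _ = (n:ℝ) ^ 2 * (n:ℝ) ^ (k - 1) := by
            rw [← pow_succ', ← pow_add]
            congr 1
            omega
        _ ≤ (2:ℝ) ^ k * (2:ℝ) ^ m := by
            apply mul_le_mul hn2 hnk1 (by positivity) (by positivity)
        _ = (2 * (2:ℝ) ^ m) * (2:ℝ) ^ (k - 1) := by
            rw [show k = (k - 1) + 1 by omega, pow_succ, Nat.add_sub_cancel]
            ring
        _ ≤ (2 * (2:ℝ) ^ m) * (k.factorial : ℝ) := by
            apply mul_le_mul_of_nonneg_left hfac (by positivity)
    exact le_of_mul_le_mul_right key hfacpos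
  -- conclude
  have h2m : (0:ℝ) < (2:ℝ) ^ m := by positivity
  have hz : (2:ℝ) ^ ((1:ℤ) - (m:ℕ)) = 2 / (2:ℝ) ^ m := by
    rw [zpow_sub₀ (by norm_num), zpow_one, zpow_natCast]
  rw [hz, ← mul_div_assoc, div_le_div_iff₀ h2m hN0]
  nlinarith
/-- With `k(n) = ⌈2·log₂ n⌉`, the quantity `(n choose k(n)) · 2^(1 - k(n)(k(n)-1)/2)`
tends to `0` as `n → ∞`. -/
theorem choose_mul_two_zpow_tendsto_zero :
    Filter.Tendsto
      (fun n : ℕ =>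
        (n.choose ⌈2 * Real.logb 2 n⌉₊ : ℝ) *
          (2 : ℝ) ^ ((1 : ℤ) -
            (⌈2 * Real.logb 2 n⌉₊ * (⌈2 * Real.logb 2 n⌉₊ - 1) / 2 : ℕ)))
      Filter.atTop (nhds 0) := by
  apply tendsto_of_tendsto_of_tendsto_of_le_of_le' tendsto_const_nhds
    (tendsto_const_div_atTop_nhds_zero_nat 4)
  · filter_upwards with n
    positivity
  · filter_upwards [eventually_ge_atTop 2] with n hn
    exact aux_bound n hn
end

section
/- Let n and k be natural numbers with n ≥ k ≥ 2. Let (Ω, P) be a finite probability space and let (X_e), indexed by the unordered pairs e of distinct elements of {1,…,n}, be a family of Boolean random variables on Ω that is m-wise independent and uniform for m = k(k-1)/2. Then the probability of the event that there exists a k-element subset S of {1,…,n} such that X_e takes the same value for all pairs e contained in S is at most (n choose k) · 2^(1 - k(k-1)/2). In particular, if (n choose k) · 2^(1 - k(k-1)/2) < 1, then there exists ω ∈ Ω such that the graph with edge set {e : X_e(ω) = true} is k-Ramsey. -/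
open Finset

/-- The graph with edge set `E` is `k`-Ramsey: it has no clique of size `k` and no
independent set of size `k`. -/
def IsRamseyIn (n : ℕ) (E : Finset (Finset (Fin n))) (k : ℕ) : Prop :=
  ¬ ∃ S : Finset (Fin n), S.card = k ∧ (IsCliqueIn n E S ∨ IsIndepIn n E S)

/-- The family `X` of Boolean random variables, indexed by the unordered pairs of
distinct elements of `Fin n`, is `m`-wise independent and uniform with respect to the
probability mass function `P` on the finite space `Ω`. -/
def KWiseIndepUniform (n : ℕ) {Ω : Type*} [Fintype Ω] (P : Ω → ℝ)
    (X : Finset (Fin n) → Ω → Bool) (m : ℕ) : Prop :=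
  ∀ J : Finset (Finset (Fin n)), J ⊆ pairsOf n → J.card ≤ m →
    ∀ b : Finset (Fin n) → Bool,
      ∑ ω ∈ Finset.univ.filter (fun ω => ∀ e ∈ J, X e ω = b e), P ω =
        (1 / 2 : ℝ) ^ J.card

/-- Union bound helper. -/
lemma aux_sum_biUnion_le {α β : Type*} [DecidableEq β] (s : Finset α) (t : α → Finset β)
    (f : β → ℝ) (hf : ∀ b, 0 ≤ f b) :
    ∑ b ∈ s.biUnion t, f b ≤ ∑ a ∈ s, ∑ b ∈ t a, f b := by
  classical
  induction s using Finset.induction with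
  | empty => simp
  | @insert a s ha ih =>
    rw [Finset.biUnion_insert, Finset.sum_insert ha]
    have h1 := Finset.sum_union_inter (s₁ := t a) (s₂ := s.biUnion t) (f := f)
    have h2 : (0:ℝ) ≤ ∑ b ∈ t a ∩ s.biUnion t, f b := Finset.sum_nonneg fun b _ => hf b
    linarith

open Classical in
/-- For an `m`-wise independent uniform family with `m = k(k-1)/2`, the probability that
some `k`-set `S` has all its pairs colored the same is at most
`(n choose k) · 2^(1 - k(k-1)/2)`; if this quantity is `< 1`, some outcome yields a
`k`-Ramsey graph. -/
theorem kwise_indep_ramsey (n k : ℕ) (hk : 2 ≤ k) (hn : k ≤ n)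
    {Ω : Type*} [Fintype Ω] (P : Ω → ℝ) (hP0 : ∀ ω, 0 ≤ P ω) (hP1 : ∑ ω, P ω = 1)
    (X : Finset (Fin n) → Ω → Bool)
    (hX : KWiseIndepUniform n P X (k * (k - 1) / 2)) :
    (∑ ω ∈ Finset.univ.filter (fun ω => ∃ S : Finset (Fin n), S.card = k ∧
        ((∀ e ∈ pairsOf n, e ⊆ S → X e ω = true) ∨
         (∀ e ∈ pairsOf n, e ⊆ S → X e ω = false))), P ω) ≤
      (n.choose k : ℝ) * (2 : ℝ) ^ ((1 : ℤ) - (k * (k - 1) / 2 : ℕ)) ∧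
    ((n.choose k : ℝ) * (2 : ℝ) ^ ((1 : ℤ) - (k * (k - 1) / 2 : ℕ)) < 1 →
      ∃ ω : Ω, IsRamseyIn n ((pairsOf n).filter (fun e => X e ω = true)) k) := by
  set m := k * (k - 1) / 2 with hm
  -- per-S bound
  have hSbound : ∀ S : Finset (Fin n), S.card = k →
      ∑ ω ∈ Finset.univ.filter (fun ω =>
        ((∀ e ∈ pairsOf n, e ⊆ S → X e ω = true) ∨
         (∀ e ∈ pairsOf n, e ⊆ S → X e ω = false))), P ω ≤ 2 * (1/2:ℝ)^m := by
    intro S hS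
    set J := S.powersetCard 2 with hJ
    have hJsub : J ⊆ pairsOf n := by
      intro p hp
      rw [hJ, Finset.mem_powersetCard] at hp
      rw [pairsOf, Finset.mem_powersetCard]
      exact ⟨p.subset_univ, hp.2⟩
    have hJcard : J.card = m := by
      rw [hJ, Finset.card_powersetCard, hS, Nat.choose_two_right, hm]
    have hfilt : ∀ (b : Bool),
        Finset.univ.filter (fun ω => ∀ e ∈ pairsOf n, e ⊆ S → X e ω = b)
        = Finset.univ.filter (fun ω => ∀ e ∈ J, X e ω = (fun _ => b) e) := by
      intro b
      apply Finset.filter_congr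
      intro ω _
      simp only [eq_iff_iff]
      constructor
      · intro h e he
        rw [hJ, Finset.mem_powersetCard] at he
        exact h e (by rw [pairsOf, Finset.mem_powersetCard]; exact ⟨e.subset_univ, he.2⟩) he.1
      · intro h e he hsub
        apply h
        rw [pairsOf, Finset.mem_powersetCard] at he
        rw [hJ, Finset.mem_powersetCard]
        exact ⟨hsub, he.2⟩
    have hA := hX J hJsub (le_of_eq hJcard) (fun _ => true)
    have hB := hX J hJsub (le_of_eq hJcard) (fun _ => false)
    rw [hJcard] at hA hB
    have hor : Finset.univ.filter (fun ω =>
        ((∀ e ∈ pairsOf n, e ⊆ S → X e ω = true) ∨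
         (∀ e ∈ pairsOf n, e ⊆ S → X e ω = false)))
        = Finset.univ.filter (fun ω => ∀ e ∈ pairsOf n, e ⊆ S → X e ω = true)
          ∪ Finset.univ.filter (fun ω => ∀ e ∈ pairsOf n, e ⊆ S → X e ω = false) := by
      rw [← Finset.filter_or]
    rw [hor]
    have h1 := Finset.sum_union_inter
      (s₁ := Finset.univ.filter (fun ω => ∀ e ∈ pairsOf n, e ⊆ S → X e ω = true))
      (s₂ := Finset.univ.filter (fun ω => ∀ e ∈ pairsOf n, e ⊆ S → X e ω = false)) (f := P)
    have h2 : (0:ℝ) ≤ ∑ ω ∈ (Finset.univ.filter (fun ω => ∀ e ∈ pairsOf n, e ⊆ S → X e ω = true)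
          ∩ Finset.univ.filter (fun ω => ∀ e ∈ pairsOf n, e ⊆ S → X e ω = false)), P ω :=
      Finset.sum_nonneg fun ω _ => hP0 ω
    have hAe : ∑ ω ∈ Finset.univ.filter (fun ω => ∀ e ∈ pairsOf n, e ⊆ S → X e ω = true), P ω
        = (1/2:ℝ)^m := by rw [hfilt true]; exact hA
    have hBe : ∑ ω ∈ Finset.univ.filter (fun ω => ∀ e ∈ pairsOf n, e ⊆ S → X e ω = false), P ω
        = (1/2:ℝ)^m := by rw [hfilt false]; exact hB
    linarith
  -- union bound
  have hbound : (∑ ω ∈ Finset.univ.filter (fun ω => ∃ S : Finset (Fin n), S.card = k ∧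
        ((∀ e ∈ pairsOf n, e ⊆ S → X e ω = true) ∨
         (∀ e ∈ pairsOf n, e ⊆ S → X e ω = false))), P ω) ≤
      (n.choose k : ℝ) * (2 : ℝ) ^ ((1 : ℤ) - (m : ℕ)) := by
    set 𝒮 := (Finset.univ : Finset (Fin n)).powersetCard k with h𝒮
    have hsub : Finset.univ.filter (fun ω => ∃ S : Finset (Fin n), S.card = k ∧
        ((∀ e ∈ pairsOf n, e ⊆ S → X e ω = true) ∨
         (∀ e ∈ pairsOf n, e ⊆ S → X e ω = false)))
        ⊆ 𝒮.biUnion (fun S => Finset.univ.filter (fun ω =>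
        ((∀ e ∈ pairsOf n, e ⊆ S → X e ω = true) ∨
         (∀ e ∈ pairsOf n, e ⊆ S → X e ω = false)))) := by
      intro ω hω
      rw [Finset.mem_filter] at hω
      obtain ⟨-, S, hScard, hSprop⟩ := hω
      rw [Finset.mem_biUnion]
      exact ⟨S, by rw [h𝒮, Finset.mem_powersetCard]; exact ⟨S.subset_univ, hScard⟩,
        by rw [Finset.mem_filter]; exact ⟨Finset.mem_univ ω, hSprop⟩⟩
    calc ∑ ω ∈ Finset.univ.filter (fun ω => ∃ S : Finset (Fin n), S.card = k ∧
        ((∀ e ∈ pairsOf n, e ⊆ S → X e ω = true) ∨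
         (∀ e ∈ pairsOf n, e ⊆ S → X e ω = false))), P ω
        ≤ ∑ ω ∈ 𝒮.biUnion (fun S => Finset.univ.filter (fun ω =>
            ((∀ e ∈ pairsOf n, e ⊆ S → X e ω = true) ∨
             (∀ e ∈ pairsOf n, e ⊆ S → X e ω = false)))), P ω :=
          Finset.sum_le_sum_of_subset_of_nonneg hsub (fun ω _ _ => hP0 ω)
      _ ≤ ∑ S ∈ 𝒮, ∑ ω ∈ Finset.univ.filter (fun ω =>
            ((∀ e ∈ pairsOf n, e ⊆ S → X e ω = true) ∨
             (∀ e ∈ pairsOf n, e ⊆ S → X e ω = false))), P ω :=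
          aux_sum_biUnion_le _ _ _ hP0
      _ ≤ ∑ S ∈ 𝒮, 2 * (1/2:ℝ)^m := by
          apply Finset.sum_le_sum
          intro S hS
          rw [h𝒮, Finset.mem_powersetCard] at hS
          exact hSbound S hS.2
      _ = (𝒮.card : ℝ) * (2 * (1/2:ℝ)^m) := by
          rw [Finset.sum_const, nsmul_eq_mul]
      _ = (n.choose k : ℝ) * (2 : ℝ) ^ ((1 : ℤ) - (m : ℕ)) := by
          rw [h𝒮, Finset.card_powersetCard, Finset.card_univ, Fintype.card_fin]
          congr 1
          rw [zpow_sub₀ (two_ne_zero), zpow_one, zpow_natCast]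
          rw [one_div, inv_pow]
          ring
  refine ⟨hbound, ?_⟩
  intro hlt
  by_contra hno
  push_neg at hno
  have hall : ∀ ω : Ω, ∃ S : Finset (Fin n), S.card = k ∧
      ((∀ e ∈ pairsOf n, e ⊆ S → X e ω = true) ∨
       (∀ e ∈ pairsOf n, e ⊆ S → X e ω = false)) := by
    intro ω
    have := hno ω
    rw [IsRamseyIn] at this
    push_neg at this
    obtain ⟨S, hScard, hSprop⟩ := this
    refine ⟨S, hScard, ?_⟩
    cases hSprop with
    | inl hcl =>
      left
      intro e he hsub
      have := hcl e he hsub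
      rw [Finset.mem_filter] at this
      exact this.2
    | inr hind =>
      right
      intro e he hsub
      have := hind e he hsub
      rw [Finset.mem_filter] at this
      have : ¬ (X e ω = true) := fun h => this ⟨he, h⟩
      simpa using this
  have hfull : Finset.univ.filter (fun ω => ∃ S : Finset (Fin n), S.card = k ∧
      ((∀ e ∈ pairsOf n, e ⊆ S → X e ω = true) ∨
       (∀ e ∈ pairsOf n, e ⊆ S → X e ω = false))) = Finset.univ := by
    apply Finset.filter_true_of_mem
    intro ω _
    exact hall ω
  rw [hfull, hP1] at hbound
  linarith
end

section
/- Let q ≥ 1 and d be natural numbers, let F be a finite field with |F| = 2^q, and let b : F → Bool be a balanced function, i.e., each of the two fibers of b has exactly 2^(q-1) elements. Let a₀, a₁, …, a_d be d+1 pairwise distinct elements of F and let b₀, b₁, …, b_d be arbitrary Boolean values. Then the number of polynomials p ∈ F[X] with degree at most d satisfying b(p(a_i)) = b_i for all i = 0, …, d equals 2^((q-1)(d+1)). Consequently, for a uniformly random polynomial p of degree at most d over F, the Boolean family (b(p(a)))_{a ∈ F} is (d+1)-wise independent and uniform. -/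
open Finset Polynomial

private lemma withbot_lt_succ_iff (d : ℕ) (x : WithBot ℕ) :
    x < ((d + 1 : ℕ) : WithBot ℕ) ↔ x ≤ (d : WithBot ℕ) := by
  cases x with
  | bot => exact iff_of_true (by exact_mod_cast WithBot.bot_lt_coe (d + 1)) bot_le
  | coe m =>
    rw [Nat.cast_withBot, Nat.cast_withBot, WithBot.coe_lt_coe, WithBot.coe_le_coe,
      Nat.lt_succ_iff]

private lemma count_eval_aux {F : Type*} [Field F] [Fintype F] [DecidableEq F] (d : ℕ)
    (a : Fin (d + 1) → F) (ha : Function.Injective a)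
    (P : Fin (d + 1) → F → Prop) [∀ i x, Decidable (P i x)] :
    {p : Polynomial F | p.degree ≤ (d : WithBot ℕ) ∧
        ∀ i : Fin (d + 1), P i (p.eval (a i))}.ncard
      = ∏ i : Fin (d + 1), (Finset.univ.filter (fun x => P i x)).card := by
  have hcard : #(univ : Finset (Fin (d + 1))) = d + 1 := by simp
  have hdeg : ∀ p : Polynomial F, p.degree ≤ (d : WithBot ℕ) ↔
      p.degree < (#(univ : Finset (Fin (d + 1))) : WithBot ℕ) := by
    intro p
    rw [hcard, ← withbot_lt_succ_iff d p.degree]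
  set S := {p : Polynomial F | p.degree ≤ (d : WithBot ℕ) ∧
      ∀ i : Fin (d + 1), P i (p.eval (a i))}
  set T := {v : Fin (d + 1) → F // ∀ i, P i (v i)}
  have hbij : ∃ e : S ≃ T, True := by
    refine ⟨Equiv.ofBijective (fun p => ⟨fun i => (p : Polynomial F).eval (a i), p.2.2⟩) ?_,
      trivial⟩
    constructor
    · rintro ⟨p₁, hp₁⟩ ⟨p₂, hp₂⟩ h
      have h' : ∀ i, p₁.eval (a i) = p₂.eval (a i) :=
        fun i => congrFun (congrArg Subtype.val h) i
      exact Subtype.ext (Polynomial.eq_of_degrees_lt_of_eval_index_eq univ ha.injOn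
        ((hdeg p₁).1 hp₁.1) ((hdeg p₂).1 hp₂.1) (fun i _ => h' i))
    · rintro ⟨v, hv⟩
      refine ⟨⟨Lagrange.interpolate univ a v, ?_, ?_⟩, ?_⟩
      · exact (hdeg _).2 (Lagrange.degree_interpolate_lt v ha.injOn)
      · intro i
        rw [Lagrange.eval_interpolate_at_node v ha.injOn (mem_univ i)]
        exact hv i
      · ext i
        exact Lagrange.eval_interpolate_at_node v ha.injOn (mem_univ i)
  obtain ⟨e, -⟩ := hbij
  rw [show S.ncard = Nat.card S from rfl, Nat.card_congr e, Nat.card_eq_fintype_card,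
    Fintype.card_subtype]
  have : (univ.filter (fun v : Fin (d + 1) → F => ∀ i, P i (v i)))
      = Fintype.piFinset (fun i => univ.filter (fun x => P i x)) := by
    ext v
    simp [Fintype.mem_piFinset]
  rw [this, Fintype.card_piFinset]

/-- Let `F` be a finite field with `2^q` elements and `b : F → Bool` a balanced function.
For any `d+1` distinct points `a i` and any prescribed Boolean values `bs i`, the number
of polynomials of degree at most `d` with `b (p (a i)) = bs i` for all `i` equals
`2^((q-1)(d+1))`.  Consequently, for a uniformly random polynomial of degree at most `d`
the Boolean family `(b (p x))_{x ∈ F}` is `(d+1)`-wise independent and uniform. -/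
theorem count_polys_with_prescribed_bits (q d : ℕ) (hq : 1 ≤ q)
    (F : Type*) [Field F] [Fintype F] (hF : Fintype.card F = 2 ^ q)
    (b : F → Bool)
    (hb_true : (Finset.univ.filter (fun x => b x = true)).card = 2 ^ (q - 1))
    (hb_false : (Finset.univ.filter (fun x => b x = false)).card = 2 ^ (q - 1))
    (a : Fin (d + 1) → F) (ha : Function.Injective a)
    (bs : Fin (d + 1) → Bool) :
    {p : Polynomial F | p.degree ≤ (d : WithBot ℕ) ∧
        ∀ i : Fin (d + 1), b (p.eval (a i)) = bs i}.ncard = 2 ^ ((q - 1) * (d + 1)) ∧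
    ∀ (J : Finset F) (c : F → Bool), J.card ≤ d + 1 →
      ({p : Polynomial F | p.degree ≤ (d : WithBot ℕ) ∧
          ∀ x ∈ J, b (p.eval x) = c x}.ncard : ℝ) / (2 : ℝ) ^ (q * (d + 1)) =
        (1 / 2 : ℝ) ^ J.card := by
  classical
  have hbal : ∀ t : Bool, (univ.filter (fun x => b x = t)).card = 2 ^ (q - 1) := by
    intro t; cases t
    · exact hb_false
    · exact hb_true
  constructor
  · rw [count_eval_aux d a ha (fun i x => b x = bs i)]
    simp only [hbal]
    rw [prod_const, card_univ, Fintype.card_fin, ← pow_mul]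
  · intro J c hJ
    -- extend `J` to a set `K` of size `d+1`
    have hd1 : d + 1 ≤ Fintype.card F := by simpa using Fintype.card_le_of_injective a ha
    obtain ⟨K, hJK, hK⟩ := Finset.exists_superset_card_eq hJ (by simpa using hd1)
    -- an injective enumeration of `K`
    set a' : Fin (d + 1) → F := fun i => (K.equivFin.symm (Fin.cast hK.symm i) : F) with ha'def
    have ha' : Function.Injective a' := by
      intro i j h
      have h2 := congrArg Fin.val (K.equivFin.symm.injective (Subtype.ext h))
      simp only [Fin.coe_cast] at h2
      exact Fin.ext h2
    have hrange : ∀ x ∈ K, ∃ i, a' i = x := by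
      intro x hx
      refine ⟨Fin.cast hK (K.equivFin ⟨x, hx⟩), ?_⟩
      simp [ha'def]
    -- rewrite the set using an index-wise predicate
    have hset : {p : Polynomial F | p.degree ≤ (d : WithBot ℕ) ∧
          ∀ x ∈ J, b (p.eval x) = c x}
        = {p : Polynomial F | p.degree ≤ (d : WithBot ℕ) ∧
          ∀ i : Fin (d + 1), (a' i ∈ J → b (p.eval (a' i)) = c (a' i))} := by
      ext p
      simp only [Set.mem_setOf_eq, and_congr_right_iff]
      intro _
      constructor
      · intro h i hi; exact h _ hi
      · intro h x hx
        obtain ⟨i, rfl⟩ := hrange x (hJK hx)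
        exact h i hx
    have hfilter : ∀ i : Fin (d + 1),
        (univ.filter (fun x => a' i ∈ J → b x = c (a' i))).card
          = if a' i ∈ J then 2 ^ (q - 1) else 2 ^ q := by
      intro i
      by_cases hi : a' i ∈ J
      · simp only [hi, if_true, true_implies]
        exact hbal _
      · simp only [hi, if_false, false_implies, Finset.filter_true, card_univ, hF]
    have hcount : {p : Polynomial F | p.degree ≤ (d : WithBot ℕ) ∧
          ∀ x ∈ J, b (p.eval x) = c x}.ncard
        = 2 ^ (q * (d + 1) - J.card) := by
      rw [hset, count_eval_aux d a' ha' (fun i x => a' i ∈ J → b x = c (a' i))]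
      simp only [hfilter]
      rw [Finset.prod_ite, Finset.prod_const, Finset.prod_const]
      have hk1 : (univ.filter (fun i : Fin (d + 1) => a' i ∈ J)).card = J.card := by
        rw [← Finset.card_image_of_injective _ ha']
        congr 1
        ext x
        simp only [Finset.mem_image, Finset.mem_filter, Finset.mem_univ, true_and]
        constructor
        · rintro ⟨i, hi, rfl⟩; exact hi
        · intro hx
          obtain ⟨i, rfl⟩ := hrange x (hJK hx)
          exact ⟨i, hx, rfl⟩
      have hk2 : (univ.filter (fun i : Fin (d + 1) => ¬ a' i ∈ J)).card
          = (d + 1) - J.card := by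
        have := Finset.card_filter_add_card_filter_not
          (s := (univ : Finset (Fin (d + 1)))) (p := fun i => a' i ∈ J)
        rw [hk1] at this
        simp only [card_univ, Fintype.card_fin] at this
        omega
      rw [hk1, hk2, ← pow_mul, ← pow_mul, ← pow_add]
      congr 1
      obtain ⟨q', rfl⟩ : ∃ q', q = q' + 1 := ⟨q - 1, by omega⟩
      obtain ⟨m, hm⟩ : ∃ m, d + 1 = J.card + m := ⟨d + 1 - J.card, by omega⟩
      simp only [Nat.add_sub_cancel]
      rw [hm, Nat.add_sub_cancel_left]
      have h1 : (q' + 1) * (J.card + m) = q' * J.card + (q' + 1) * m + J.card := by ring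
      omega
    rw [hcount]
    have hkle : J.card ≤ q * (d + 1) := le_trans hJ (Nat.le_mul_of_pos_left _ hq)
    have h2 : (2 : ℝ) ^ (q * (d + 1)) = 2 ^ (q * (d + 1) - J.card) * 2 ^ J.card := by
      rw [← pow_add]
      congr 1
      omega
    rw [Nat.cast_pow, Nat.cast_ofNat, h2, one_div, inv_pow]
    rw [div_eq_iff (by positivity)]
    field_simp
end

section
/- Let G₁ and G₂ be simple graphs and let k₁, k₂ be natural numbers. If G₁ is k₁-Ramsey and G₂ is k₂-Ramsey, then the Naor product G₁ · G₂ is (k₁·k₂)-Ramsey. -/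
/-- The Naor product of two simple graphs: vertices `(u₁,u₂)` and `(v₁,v₂)` are adjacent
iff `u₁` is adjacent to `v₁` in `G₁`, or `u₁ = v₁` and `u₂` is adjacent to `v₂` in `G₂`. -/
def naorProd {V₁ V₂ : Type*} (G₁ : SimpleGraph V₁) (G₂ : SimpleGraph V₂) :
    SimpleGraph (V₁ × V₂) where
  Adj x y := G₁.Adj x.1 y.1 ∨ (x.1 = y.1 ∧ G₂.Adj x.2 y.2)
  symm := by
    constructor
    rintro ⟨u₁, u₂⟩ ⟨v₁, v₂⟩ (h | ⟨h₁, h₂⟩)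
    · exact Or.inl h.symm
    · exact Or.inr ⟨h₁.symm, h₂.symm⟩
  loopless := by
    constructor
    rintro ⟨u₁, u₂⟩ (h | ⟨-, h⟩)
    · exact G₁.irrefl h
    · exact G₂.irrefl h

/-!
A clique of the Naor product projects onto a clique of `G₁`, and each fibre of the projection is
a clique of `G₂`; so a clique has fewer than `k₁` fibres of fewer than `k₂` vertices each.
Complementation commutes with the Naor product, so the same bound holds for independent sets.
-/

open Finset

namespace SimpleGraph

variable {V V₁ V₂ : Type*} {G₁ : SimpleGraph V₁} {G₂ : SimpleGraph V₂}

theorem IsClique.card_lt_of_cliqueFree {G : SimpleGraph V} {k : ℕ} {t : Finset V}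
    (ht : G.IsClique (t : Set V)) (hG : G.CliqueFree k) : #t < k :=
  lt_of_not_ge fun hk ↦ hG.mono hk t ⟨ht, rfl⟩

theorem compl_naorProd (G₁ : SimpleGraph V₁) (G₂ : SimpleGraph V₂) :
    (naorProd G₁ G₂)ᶜ = naorProd G₁ᶜ G₂ᶜ := by
  ext ⟨x₁, x₂⟩ ⟨y₁, y₂⟩
  simp only [compl_adj, naorProd, ne_eq, Prod.mk.injEq]
  by_cases h : x₁ = y₁
  · subst h
    simp
  · simp [h]

theorem IsClique.image_fst_naorProd {s : Set (V₁ × V₂)} (hs : (naorProd G₁ G₂).IsClique s) :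
    G₁.IsClique (Prod.fst '' s) := by
  rintro _ ⟨x, hx, rfl⟩ _ ⟨y, hy, rfl⟩ hxy
  exact (hs hx hy (ne_of_apply_ne _ hxy)).resolve_right fun h ↦ hxy h.1

theorem IsClique.image_snd_fiber_naorProd {s : Set (V₁ × V₂)}
    (hs : (naorProd G₁ G₂).IsClique s) (a : V₁) :
    G₂.IsClique (Prod.snd '' {x ∈ s | x.1 = a}) := by
  rintro _ ⟨x, ⟨hx, rfl⟩, rfl⟩ _ ⟨y, ⟨hy, hya⟩, rfl⟩ hxy
  exact ((hs hx hy (ne_of_apply_ne _ hxy)).resolve_left (hya ▸ G₁.irrefl)).2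

theorem CliqueFree.naorProd {k₁ k₂ : ℕ} (h₁ : G₁.CliqueFree k₁) (h₂ : G₂.CliqueFree k₂) :
    (naorProd G₁ G₂).CliqueFree (k₁ * k₂) := by
  classical
  rintro s ⟨hs, hcard⟩
  have hk₂ : 0 < k₂ := Nat.pos_of_ne_zero (by rintro rfl; exact not_cliqueFree_zero h₂)
  have hfiber : ∀ a ∈ s.image Prod.fst, #{x ∈ s | x.1 = a} ≤ k₂ := fun a _ ↦ by
    have hinj : Set.InjOn Prod.snd (↑{x ∈ s | x.1 = a} : Set (V₁ × V₂)) :=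
      fun x hx y hy h ↦ Prod.ext ((mem_filter.1 hx).2.trans (mem_filter.1 hy).2.symm) h
    rw [← card_image_of_injOn hinj]
    refine (IsClique.card_lt_of_cliqueFree ?_ h₂).le
    simpa using hs.image_snd_fiber_naorProd a
  have hbase : #(s.image Prod.fst) < k₁ :=
    IsClique.card_lt_of_cliqueFree (by simpa using hs.image_fst_naorProd) h₁
  have hlt : #s < k₂ * k₁ := calc
    #s ≤ k₂ * #(s.image Prod.fst) := card_le_mul_card_image s k₂ hfiber
    _ < k₂ * k₁ := Nat.mul_lt_mul_of_pos_left hbase hk₂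
  exact hlt.ne (hcard.trans (mul_comm k₁ k₂))

end SimpleGraph

open SimpleGraph in
/-- If `G₁` is `k₁`-Ramsey and `G₂` is `k₂`-Ramsey, then their Naor product is
`k₁·k₂`-Ramsey. -/
theorem naorProd_isRamsey {V₁ V₂ : Type*} (G₁ : SimpleGraph V₁) (G₂ : SimpleGraph V₂)
    (k₁ k₂ : ℕ) (h₁ : IsRamsey G₁ k₁) (h₂ : IsRamsey G₂ k₂) :
    IsRamsey (naorProd G₁ G₂) (k₁ * k₂) :=
  ⟨h₁.1.naorProd h₂.1, compl_naorProd G₁ G₂ ▸ h₁.2.naorProd h₂.2⟩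
end

section
/- Let G₁ and G₂ be simple graphs and let k₁, k₂ be natural numbers with k₁, k₂ ≥ 1. If G₁ contains no clique of size k₁ and G₂ contains no clique of size k₂, then the Naor product G₁ · G₂ contains no clique of size (k₁ − 1)·(k₂ − 1) + 1; in particular it contains no clique of size k₁·k₂. -/
/-!
A clique of the Naor product projects onto a clique of `G₁`, so it meets fewer than `k₁` fibres
`{a} × V₂`; within one fibre the adjacency is that of `G₂`, so each fibre holds fewer than `k₂`
of its vertices. Counting fibre by fibre bounds its size by `(k₁ - 1) * (k₂ - 1)`.
-/

open Finset

namespace SimpleGraph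

theorem IsClique.card_lt_of_cliqueFree_s10 {V : Type*} {G : SimpleGraph V} {n : ℕ}
    (h : G.CliqueFree n) {s : Finset V} (hs : G.IsClique (s : Set V)) : #s < n := by
  by_contra! hle
  obtain ⟨t, hts, rfl⟩ := exists_subset_card_eq hle
  exact h t ⟨hs.subset (coe_subset.2 hts), rfl⟩

end SimpleGraph

section NaorProd

variable {V₁ V₂ : Type*} {G₁ : SimpleGraph V₁} {G₂ : SimpleGraph V₂}

theorem SimpleGraph.IsClique.image_fst_of_naorProd {s : Set (V₁ × V₂)}
    (hs : (naorProd G₁ G₂).IsClique s) : G₁.IsClique (Prod.fst '' s) := by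
  rintro _ ⟨x, hx, rfl⟩ _ ⟨y, hy, rfl⟩ hne
  rcases hs hx hy (fun hxy ↦ hne (congrArg Prod.fst hxy)) with hadj | ⟨heq, -⟩
  · exact hadj
  · exact absurd heq hne

theorem SimpleGraph.IsClique.preimage_mk_of_naorProd {s : Set (V₁ × V₂)}
    (hs : (naorProd G₁ G₂).IsClique s) (a : V₁) : G₂.IsClique (Prod.mk a ⁻¹' s) := by
  intro b hb c hc hne
  rcases hs hb hc (fun hbc ↦ hne (congrArg Prod.snd hbc)) with hadj | ⟨-, hadj⟩
  · exact absurd hadj G₁.irrefl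
  · exact hadj

theorem card_le_of_isClique_naorProd {k₁ k₂ : ℕ} (h₁ : G₁.CliqueFree k₁)
    (h₂ : G₂.CliqueFree k₂) {s : Finset (V₁ × V₂)}
    (hs : (naorProd G₁ G₂).IsClique (s : Set (V₁ × V₂))) : #s ≤ (k₁ - 1) * (k₂ - 1) := by
  classical
  have hfibre (a : V₁) : #{x ∈ s | x.1 = a} ≤ k₂ - 1 := by
    let t := s.preimage (Prod.mk a) (Prod.mk_right_injective a).injOn
    have hst : #{x ∈ s | x.1 = a} ≤ #t := by
      refine card_le_card_of_injOn Prod.snd ?_ ?_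
      · rintro ⟨a', b⟩ hx
        simp only [mem_coe, mem_filter] at hx
        obtain ⟨hx, rfl⟩ := hx
        simpa [t] using hx
      · rintro ⟨a', b⟩ hx ⟨a'', c⟩ hy (rfl : b = c)
        simp only [mem_coe, mem_filter] at hx hy
        rw [hx.2, hy.2]
    have ht : G₂.IsClique (t : Set V₂) := by
      simpa [t] using hs.preimage_mk_of_naorProd a
    exact hst.trans (Nat.le_sub_one_of_lt (ht.card_lt_of_cliqueFree_s10 h₂))
  have himage : #(s.image Prod.fst) ≤ k₁ - 1 :=
    Nat.le_sub_one_of_lt <| SimpleGraph.IsClique.card_lt_of_cliqueFree_s10 h₁ <| by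
      simpa using hs.image_fst_of_naorProd
  calc #s ≤ (k₂ - 1) * #(s.image Prod.fst) := card_le_mul_card_image s _ fun a _ ↦ hfibre a
    _ ≤ (k₂ - 1) * (k₁ - 1) := Nat.mul_le_mul_left _ himage
    _ = (k₁ - 1) * (k₂ - 1) := Nat.mul_comm _ _

theorem naorProd_cliqueFree_mul_succ {k₁ k₂ : ℕ} (h₁ : G₁.CliqueFree k₁)
    (h₂ : G₂.CliqueFree k₂) : (naorProd G₁ G₂).CliqueFree ((k₁ - 1) * (k₂ - 1) + 1) := by
  rintro s ⟨hs, hcard⟩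
  have := card_le_of_isClique_naorProd h₁ h₂ hs
  omega

end NaorProd

/-- If `G₁` has no `k₁`-clique and `G₂` has no `k₂`-clique, then the Naor product has no
clique of size `(k₁-1)(k₂-1)+1`; in particular it has no clique of size `k₁·k₂`. -/
theorem naorProd_cliqueFree {V₁ V₂ : Type*} (G₁ : SimpleGraph V₁) (G₂ : SimpleGraph V₂)
    (k₁ k₂ : ℕ) (hk₁ : 1 ≤ k₁) (hk₂ : 1 ≤ k₂)
    (h₁ : G₁.CliqueFree k₁) (h₂ : G₂.CliqueFree k₂) :
    (naorProd G₁ G₂).CliqueFree ((k₁ - 1) * (k₂ - 1) + 1) ∧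
      (naorProd G₁ G₂).CliqueFree (k₁ * k₂) := by
  have hsucc := naorProd_cliqueFree_mul_succ h₁ h₂
  refine ⟨hsucc, hsucc.mono ?_⟩
  have hlt : (k₁ - 1) * (k₂ - 1) < k₁ * k₂ :=
    Nat.mul_lt_mul_of_lt_of_le (Nat.sub_lt hk₁ Nat.one_pos) (Nat.sub_le k₂ 1) hk₂
  omega
end

section
/- Let k ≥ 2 be a natural number and let n be a natural number with n ≤ 2^(k−1)/(e·k) − 1, where e is Euler's number. Then there exists a 2-coloring χ : {1,…,n} → Bool such that no k-term arithmetic progression contained in {1,…,n} is monochromatic under χ; that is, for all natural numbers a ≥ 1 and d ≥ 1 with a + (k−1)·d ≤ n, the values χ(a), χ(a+d), …, χ(a+(k−1)d) are not all equal. -/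
/-!
Lovász Local Lemma. Under a uniformly random 2-colouring of `{1, …, n}` a given `k`-term progression
is monochromatic with probability `p = 2 ^ (1 - k)`, independently of the progressions disjoint from
it. At most `n` progressions pass through a point, so each progression meets at most `d = k n`
others, and the hypothesis on `n` is exactly `e p (d + 1) ≤ 1`. The local lemma itself is proved by
counting colourings: adding one event to a family of avoided events keeps at least a fraction
`1 - x` of the colourings, by strong induction on the family.
-/

open Finset

theorem exists_le_mul_one_sub_pow (d : ℕ) :
    ∃ x : ℝ, 0 ≤ x ∧ x < 1 ∧ (Real.exp 1 * (d + 1))⁻¹ ≤ x * (1 - x) ^ d := by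
  rcases Nat.eq_zero_or_pos d with rfl | hd
  · refine ⟨(Real.exp 1)⁻¹, by positivity, inv_lt_one_of_one_lt₀ (by simp), ?_⟩
    simp
  · refine ⟨(d + 1 : ℝ)⁻¹, by positivity, inv_lt_one_of_one_lt₀ (by simp [hd]), ?_⟩
    have : 1 - (d + 1 : ℝ)⁻¹ = (1 + (d : ℝ)⁻¹)⁻¹ := by field_simp; ring
    rw [this, inv_pow, mul_inv, mul_comm]
    gcongr
    exact Real.one_add_inv_pow_le_exp

section Colorings

variable {α β : Type*} [Fintype α] [DecidableEq α] [Fintype β] [DecidableEq β]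

theorem card_inter_mul_card_fun_eq {A B : Finset (α → β)} {s : Finset α}
    (hA : DependsOn (· ∈ A) (s : Set α)) (hB : DependsOn (· ∈ B) (s : Set α)ᶜ) :
    #(A ∩ B) * Fintype.card (α → β) = #A * #B := by
  have mem_A {f g : α → β} (hg : g ∈ A) : s.piecewise g f ∈ A :=
    (hA fun x hx => piecewise_eq_of_mem s g f hx).mpr hg
  have mem_B {f g : α → β} (hg : g ∈ B) : s.piecewise f g ∈ B :=
    (hB fun x hx => piecewise_eq_of_notMem s f g hx).mpr hg
  have swap (p : (α → β) × (α → β)) :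
      (s.piecewise (s.piecewise p.1 p.2) (s.piecewise p.2 p.1),
        s.piecewise (s.piecewise p.2 p.1) (s.piecewise p.1 p.2)) = p := by
    ext x <;> by_cases hx : x ∈ s <;> simp [hx]
  -- exchanging the `s`-parts of `f` and `g` maps `A ×ˢ B` bijectively onto `(A ∩ B) ×ˢ univ`
  rw [← card_univ, ← card_product, ← card_product]
  refine (card_nbij' (fun p => (s.piecewise p.1 p.2, s.piecewise p.2 p.1))
    (fun p => (s.piecewise p.1 p.2, s.piecewise p.2 p.1)) ?_ ?_ (fun p _ => swap p)
    (fun p _ => swap p)).symm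
  · rintro ⟨f, g⟩ hfg
    obtain ⟨hf, hg⟩ := mem_product.1 hfg
    exact mem_product.2 ⟨mem_inter.2 ⟨mem_A hf, mem_B hg⟩, mem_univ _⟩
  · rintro ⟨f, g⟩ hfg
    obtain ⟨hf, -⟩ := mem_product.1 hfg
    exact mem_product.2 ⟨mem_A (mem_inter.1 hf).1, mem_B (mem_inter.1 hf).2⟩

theorem card_filter_forall_eq_mul_pow (s : Finset α) (b : β) :
    #{f : α → β | ∀ x ∈ s, f x = b} * Fintype.card β ^ #s = Fintype.card (α → β) := by
  have : ({f : α → β | ∀ x ∈ s, f x = b} : Finset _) =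
      Fintype.piFinset fun x => if x ∈ s then {b} else univ := by
    ext f
    simp only [mem_filter, mem_univ, true_and, Fintype.mem_piFinset]
    refine forall_congr' fun x => ?_
    split_ifs with hx <;> simp [hx]
  rw [this, Fintype.card_piFinset, Fintype.card_fun]
  simp only [apply_ite card, card_singleton]
  rw [prod_ite, prod_const_one, one_mul, prod_const, card_univ, ← pow_add]
  congr 1
  rw [← card_univ, ← card_filter_add_card_filter_not (· ∉ s) (s := univ)]
  simp

def monochromatic (s : Finset α) : Finset (α → β) := {f | ∃ b, ∀ x ∈ s, f x = b}

@[simp]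
theorem mem_monochromatic {s : Finset α} {f : α → β} :
    f ∈ monochromatic s ↔ ∃ b, ∀ x ∈ s, f x = b := by
  simp [monochromatic]

theorem card_monochromatic_mul_pow {s : Finset α} (hs : s.Nonempty) :
    #(monochromatic s : Finset (α → β)) * Fintype.card β ^ #s
      = Fintype.card β * Fintype.card (α → β) := by
  have : (monochromatic s : Finset (α → β)) = univ.biUnion fun b => {f | ∀ x ∈ s, f x = b} := by
    ext f
    simp [monochromatic]
  obtain ⟨x₀, hx₀⟩ := hs
  rw [this, card_biUnion, sum_mul, sum_congr rfl fun b _ => card_filter_forall_eq_mul_pow s b,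
    sum_const, card_univ, smul_eq_mul]
  intro b _ c _ hbc
  simp only [Function.onFun, disjoint_left, mem_filter, mem_univ, true_and]
  exact fun f hf hf' => hbc ((hf x₀ hx₀).symm.trans (hf' x₀ hx₀))

theorem dependsOn_mem_monochromatic (s : Finset α) :
    DependsOn (· ∈ (monochromatic s : Finset (α → β))) s := by
  intro f g hfg
  simp only [mem_monochromatic, eq_iff_iff]
  exact exists_congr fun b => forall₂_congr fun x hx => by rw [hfg x hx]

variable {ι : Type*} (B : ι → Finset (α → β))

def avoiding (S : Finset ι) : Finset (α → β) := {f | ∀ i ∈ S, f ∉ B i}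

variable {B}

@[simp]
theorem avoiding_empty : avoiding B ∅ = univ := by
  simp [avoiding]

theorem avoiding_anti {S S' : Finset ι} (h : S ⊆ S') : avoiding B S' ⊆ avoiding B S := by
  intro f
  simp only [avoiding, mem_filter, mem_univ, true_and]
  exact fun hf i hi => hf i (h hi)

theorem card_avoiding_insert_add [DecidableEq ι] (i : ι) (S : Finset ι) :
    #(avoiding B (insert i S)) + #(B i ∩ avoiding B S) = #(avoiding B S) := by
  have : avoiding B (insert i S) = avoiding B S \ B i := by
    ext f
    simp [avoiding, and_comm]
  rw [this, inter_comm, card_sdiff_add_card_inter]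

theorem dependsOn_mem_avoiding {S : Finset ι} {u : Set α}
    (h : ∀ i ∈ S, DependsOn (· ∈ B i) u) : DependsOn (· ∈ avoiding B S) u := by
  intro f g hfg
  simp only [avoiding, mem_filter, mem_univ, true_and, eq_iff_iff]
  exact forall₂_congr fun i hi => not_congr (h i hi hfg).to_iff

theorem one_sub_mul_card_avoiding_le [DecidableEq ι] {i : ι} {S : Finset ι} {x : ℝ}
    (h : (#(B i ∩ avoiding B S) : ℝ) ≤ x * #(avoiding B S)) :
    (1 - x) * #(avoiding B S) ≤ #(avoiding B (insert i S)) := by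
  have := card_avoiding_insert_add (B := B) i S
  have : (#(avoiding B (insert i S)) : ℝ) + #(B i ∩ avoiding B S) = #(avoiding B S) := by
    exact_mod_cast this
  linarith

theorem one_sub_pow_mul_card_avoiding_le [DecidableEq ι] {x : ℝ} (hx : x ≤ 1) {U V : Finset ι}
    (hUV : Disjoint U V)
    (h : ∀ W ⊆ V, ∀ r ∈ V, r ∉ W →
      (#(B r ∩ avoiding B (U ∪ W)) : ℝ) ≤ x * #(avoiding B (U ∪ W))) :
    (1 - x) ^ #V * #(avoiding B U) ≤ #(avoiding B (U ∪ V)) := by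
  induction V using Finset.induction_on with
  | empty => simp
  | insert r V hrV ih =>
    have hV : V ⊆ insert r V := subset_insert r V
    calc (1 - x) ^ #(insert r V) * #(avoiding B U)
        = (1 - x) * ((1 - x) ^ #V * #(avoiding B U)) := by
          rw [card_insert_of_notMem hrV, pow_succ]; ring
      _ ≤ (1 - x) * #(avoiding B (U ∪ V)) :=
          mul_le_mul_of_nonneg_left
            (ih (disjoint_of_subset_right hV hUV)
              fun W hW r hr hrW => h W (hW.trans hV) r (hV hr) hrW) (by linarith)
      _ ≤ #(avoiding B (U ∪ insert r V)) := by
          rw [union_insert]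
          exact one_sub_mul_card_avoiding_le (h V hV r (mem_insert_self r V) hrV)

theorem card_inter_avoiding_mul_card_fun_eq {T : ι → Finset α} {i : ι} {S : Finset ι}
    (hi : DependsOn (· ∈ B i) (T i : Set α))
    (hS : ∀ j ∈ S, DependsOn (· ∈ B j) (T j : Set α) ∧ Disjoint (T i) (T j)) :
    #(B i ∩ avoiding B S) * Fintype.card (α → β) = #(B i) * #(avoiding B S) :=
  card_inter_mul_card_fun_eq hi <| dependsOn_mem_avoiding fun j hj =>
    (hS j hj).1.mono <| Set.subset_compl_iff_disjoint_right.2 <| disjoint_coe.2 (hS j hj).2.symm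

variable [DecidableEq ι] {T : ι → Finset α} {E : Finset ι} {x : ℝ} {d : ℕ}

theorem card_inter_avoiding_le [Nonempty β] (hx₀ : 0 ≤ x) (hx₁ : x ≤ 1)
    (hdep : ∀ i ∈ E, DependsOn (· ∈ B i) (T i : Set α))
    (hdeg : ∀ i ∈ E, #{j ∈ E | j ≠ i ∧ ¬Disjoint (T i) (T j)} ≤ d)
    (hB : ∀ i ∈ E, (#(B i) : ℝ) ≤ x * (1 - x) ^ d * Fintype.card (α → β))
    {S : Finset ι} (hSE : S ⊆ E) {i : ι} (hi : i ∈ E) (hiS : i ∉ S) :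
    (#(B i ∩ avoiding B S) : ℝ) ≤ x * #(avoiding B S) := by
  induction S using Finset.strongInduction generalizing i with
  | H S ih =>
  set S₁ := {j ∈ S | ¬Disjoint (T i) (T j)}
  set S₂ := {j ∈ S | Disjoint (T i) (T j)}
  have hS₂ : S₂ ⊆ S := filter_subset _ _
  have hsplit : S₂ ∪ S₁ = S := filter_union_filter_not_eq _ _
  have hindep : #(B i ∩ avoiding B S₂) * Fintype.card (α → β) = #(B i) * #(avoiding B S₂) :=
    card_inter_avoiding_mul_card_fun_eq (hdep i hi) fun j hj =>
      ⟨hdep j (hSE (hS₂ hj)), (mem_filter.1 hj).2⟩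
  have hchain : (1 - x) ^ #S₁ * #(avoiding B S₂) ≤ #(avoiding B S) := by
    conv_rhs => rw [← hsplit]
    refine one_sub_pow_mul_card_avoiding_le hx₁ (disjoint_filter_filter_not _ _ _)
      fun W hW r hr hrW => ?_
    obtain ⟨hrS, hri⟩ := mem_filter.1 hr
    have hWS : W ⊆ S := hW.trans (filter_subset _ _)
    have hr' : r ∉ S₂ ∪ W := fun h =>
      (mem_union.1 h).elim (fun h => hri (mem_filter.1 h).2) hrW
    exact ih _ ((ssubset_iff_of_subset (union_subset hS₂ hWS)).2 ⟨r, hrS, hr'⟩)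
      (union_subset (hS₂.trans hSE) (hWS.trans hSE)) (hSE hrS) hr'
  have hdegS₁ : #S₁ ≤ d := by
    refine (card_le_card fun j hj => ?_).trans (hdeg i hi)
    obtain ⟨hjS, hij⟩ := mem_filter.1 hj
    exact mem_filter.2 ⟨hSE hjS, fun h => hiS (h ▸ hjS), hij⟩
  have hΩ : (0 : ℝ) < Fintype.card (α → β) := by exact_mod_cast Fintype.card_pos
  -- Only the events of `S₂` are independent of `B i`; putting back those of `S₁` costs a factor
  -- `(1 - x) ^ #S₁ ≥ (1 - x) ^ d`, which the bound on `#(B i)` absorbs.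
  calc (#(B i ∩ avoiding B S) : ℝ) ≤ #(B i ∩ avoiding B S₂) := by
        exact_mod_cast card_le_card (inter_subset_inter_left (avoiding_anti hS₂))
    _ = #(B i) * #(avoiding B S₂) / Fintype.card (α → β) := by
        rw [eq_div_iff hΩ.ne']; exact_mod_cast hindep
    _ ≤ x * (1 - x) ^ d * #(avoiding B S₂) := by
        rw [div_le_iff₀ hΩ]
        nlinarith [hB i hi]
    _ ≤ x * ((1 - x) ^ #S₁ * #(avoiding B S₂)) := by
        rw [← mul_assoc]
        have := pow_le_pow_of_le_one (sub_nonneg.2 hx₁) (by linarith) hdegS₁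
        gcongr
    _ ≤ x * #(avoiding B S) := by gcongr

theorem exists_forall_notMem_of_le_mul_one_sub_pow [Nonempty β] (hx₀ : 0 ≤ x) (hx₁ : x < 1)
    (hdep : ∀ i ∈ E, DependsOn (· ∈ B i) (T i : Set α))
    (hdeg : ∀ i ∈ E, #{j ∈ E | j ≠ i ∧ ¬Disjoint (T i) (T j)} ≤ d)
    (hB : ∀ i ∈ E, (#(B i) : ℝ) ≤ x * (1 - x) ^ d * Fintype.card (α → β)) :
    ∃ f : α → β, ∀ i ∈ E, f ∉ B i := by
  have hchain := one_sub_pow_mul_card_avoiding_le hx₁.le (disjoint_empty_left E)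
    fun W hW r hr hrW => card_inter_avoiding_le hx₀ hx₁.le hdep hdeg hB
      (union_subset (empty_subset E) hW) hr (by simpa using hrW)
  rw [avoiding_empty, empty_union, card_univ] at hchain
  have hpos : (0 : ℝ) < #(avoiding B E) :=
    hchain.trans_lt' (by have := Fintype.card_pos (α := α → β); positivity)
  obtain ⟨f, hf⟩ := card_pos.1 (by exact_mod_cast hpos)
  exact ⟨f, (mem_filter.1 hf).2⟩

theorem exists_forall_notMem_of_exp_mul_le [Nonempty β] {p : ℝ}
    (hdep : ∀ i ∈ E, DependsOn (· ∈ B i) (T i : Set α))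
    (hdeg : ∀ i ∈ E, #{j ∈ E | j ≠ i ∧ ¬Disjoint (T i) (T j)} ≤ d)
    (hB : ∀ i ∈ E, (#(B i) : ℝ) ≤ p * Fintype.card (α → β))
    (hp : Real.exp 1 * p * (d + 1) ≤ 1) :
    ∃ f : α → β, ∀ i ∈ E, f ∉ B i := by
  obtain ⟨x, hx₀, hx₁, hx⟩ := exists_le_mul_one_sub_pow d
  have hpx : p ≤ x * (1 - x) ^ d :=
    le_trans (by rw [← one_div, le_div_iff₀ (by positivity)]; linarith) hx
  exact exists_forall_notMem_of_le_mul_one_sub_pow hx₀ hx₁ hdep hdeg fun i hi =>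
    (hB i hi).trans (by gcongr)

end Colorings

theorem sum_range_mul_le {f : ℕ → ℕ} {k m : ℕ} (h : ∀ j < k, j * f j ≤ m) :
    ∑ j ∈ range k, j * f j ≤ (k - 1) * m := by
  cases k with
  | zero => simp
  | succ k =>
    rw [sum_range_succ', zero_mul, add_zero, Nat.add_sub_cancel]
    simpa using sum_le_card_nsmul (range k) _ m fun j hj => h (j + 1) (by simpa using hj)

theorem sum_range_sub_mul_le {f : ℕ → ℕ} {k m : ℕ} (h : ∀ j < k, (k - 1 - j) * f j ≤ m) :
    ∑ j ∈ range k, (k - 1 - j) * f j ≤ (k - 1) * m := by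
  rw [← sum_range_reflect]
  calc ∑ j ∈ range k, (k - 1 - (k - 1 - j)) * f (k - 1 - j)
      = ∑ j ∈ range k, j * f (k - 1 - j) :=
        sum_congr rfl fun j hj => by rw [Nat.sub_sub_self (by simp at hj; omega)]
    _ ≤ (k - 1) * m := sum_range_mul_le fun j hj => by
        simpa [Nat.sub_sub_self (by omega : j ≤ k - 1)] using h (k - 1 - j) (by omega)

theorem mul_card_le_of_forall_mul_le {s : Finset ℕ} {c m : ℕ} (h : ∀ d ∈ s, 0 < d ∧ c * d ≤ m) :
    c * #s ≤ m := by
  rcases Nat.eq_zero_or_pos c with rfl | hc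
  · simp
  have : s ⊆ Icc 1 (m / c) := fun d hd =>
    mem_Icc.2 ⟨(h d hd).1, (Nat.le_div_iff_mul_le hc).2 (by rw [mul_comm]; exact (h d hd).2)⟩
  calc c * #s ≤ c * (m / c) := by
        gcongr
        simpa using card_le_card this
    _ ≤ m := Nat.mul_div_le m c

theorem sum_range_card_filter_le {k : ℕ} (hk : 2 ≤ k) (s : Finset ℕ) (hs : ∀ d ∈ s, 0 < d)
    (u v : ℕ) : ∑ j ∈ range k, #{d ∈ s | j * d ≤ u ∧ (k - 1 - j) * d ≤ v} ≤ u + v := by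
  set D := fun j => ({d ∈ s | j * d ≤ u ∧ (k - 1 - j) * d ≤ v} : Finset ℕ)
  have hleft : ∑ j ∈ range k, j * #(D j) ≤ (k - 1) * u :=
    sum_range_mul_le fun j _ => mul_card_le_of_forall_mul_le fun d hd =>
      ⟨hs d (mem_filter.1 hd).1, (mem_filter.1 hd).2.1⟩
  have hright : ∑ j ∈ range k, (k - 1 - j) * #(D j) ≤ (k - 1) * v :=
    sum_range_sub_mul_le fun j _ => mul_card_le_of_forall_mul_le fun d hd =>
      ⟨hs d (mem_filter.1 hd).1, (mem_filter.1 hd).2.2⟩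
  -- weight each `d` by `k - 1 = j + (k - 1 - j)`
  refine Nat.le_of_mul_le_mul_left ?_ (by omega : 0 < k - 1)
  calc (k - 1) * ∑ j ∈ range k, #(D j)
      = ∑ j ∈ range k, (j * #(D j) + (k - 1 - j) * #(D j)) := by
        rw [mul_sum]
        refine sum_congr rfl fun j hj => ?_
        rw [← add_mul, Nat.add_sub_cancel' (Nat.le_sub_one_of_lt (mem_range.1 hj))]
    _ ≤ (k - 1) * u + (k - 1) * v := by
        rw [sum_add_distrib]
        exact add_le_add hleft hright
    _ = (k - 1) * (u + v) := (mul_add _ _ _).symm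

section ArithmeticProgression

/-- `(a, d)` stands for `a, a + d, …, a + (k - 1) d`. The points live in `Fin (n + 1)`, whose `0`
lies on no progression. -/
def progressions (k n : ℕ) : Finset (ℕ × ℕ) :=
  {q ∈ Icc 1 n ×ˢ Icc 1 n | q.1 + (k - 1) * q.2 ≤ n}

def progressionPoints (k n : ℕ) (q : ℕ × ℕ) : Finset (Fin (n + 1)) :=
  {x | ∃ i < k, q.1 + i * q.2 = x}

variable {k n : ℕ} {q : ℕ × ℕ}

theorem mem_progressions : q ∈ progressions k n ↔
    1 ≤ q.1 ∧ 1 ≤ q.2 ∧ q.2 ≤ n ∧ q.1 + (k - 1) * q.2 ≤ n := by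
  simp only [progressions, mem_filter, mem_product, mem_Icc]
  omega

@[simp]
theorem mem_progressionPoints {x : Fin (n + 1)} :
    x ∈ progressionPoints k n q ↔ ∃ i < k, q.1 + i * q.2 = x := by
  simp [progressionPoints]

theorem card_progressionPoints (hq : q ∈ progressions k n) : #(progressionPoints k n q) = k := by
  obtain ⟨-, hd, -, hlast⟩ := mem_progressions.1 hq
  have hlt {i : ℕ} (hi : i < k) : q.1 + i * q.2 < n + 1 := by
    have := Nat.mul_le_mul_right q.2 (Nat.le_sub_one_of_lt hi)
    omega
  refine .trans ?_ (card_range k)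
  refine (card_bij (fun i hi => ⟨q.1 + i * q.2, hlt (mem_range.1 hi)⟩) ?_ ?_ ?_).symm
  · exact fun i hi => mem_progressionPoints.2 ⟨i, mem_range.1 hi, rfl⟩
  · intro i _ j _ hij
    exact Nat.eq_of_mul_eq_mul_right hd (by simpa using hij)
  · intro x hx
    obtain ⟨i, hi, hx⟩ := mem_progressionPoints.1 hx
    exact ⟨i, mem_range.2 hi, Fin.ext hx⟩

theorem card_filter_mem_progressionPoints_le (hk : 2 ≤ k) (x : Fin (n + 1)) :
    #{q ∈ progressions k n | x ∈ progressionPoints k n q} ≤ n := by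
  set y : ℕ := x.val
  let D (j : ℕ) : Finset ℕ := {d ∈ Icc 1 n | j * d ≤ y - 1 ∧ (k - 1 - j) * d ≤ n - y}
  -- a progression through `x`, with `x` as its `j`-th term, is determined by `j` and its difference
  have hsub : {q ∈ progressions k n | x ∈ progressionPoints k n q} ⊆
      (range k).biUnion fun j => (D j).image fun d => (y - j * d, d) := by
    rintro ⟨a, d⟩ hq
    obtain ⟨hq, hx⟩ := mem_filter.1 hq
    obtain ⟨i, hi, hy⟩ : ∃ i < k, a + i * d = y := mem_progressionPoints.1 hx
    obtain ⟨ha, hd, hdn, hlast⟩ : 1 ≤ a ∧ 1 ≤ d ∧ d ≤ n ∧ a + (k - 1) * d ≤ n :=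
      mem_progressions.1 hq
    have hid : (k - 1 - i) * d = (k - 1) * d - i * d := Nat.sub_mul _ _ _
    have := Nat.mul_le_mul_right d (Nat.le_sub_one_of_lt hi)
    simp only [mem_biUnion, mem_range, mem_image, mem_filter, mem_Icc, Prod.mk.injEq, D]
    exact ⟨i, hi, d, ⟨⟨hd, hdn⟩, by omega, by omega⟩, by omega, rfl⟩
  calc #{q ∈ progressions k n | x ∈ progressionPoints k n q}
      ≤ ∑ j ∈ range k, #(D j) := (card_le_card hsub).trans <| card_biUnion_le.trans <|
        sum_le_sum fun j _ => card_image_le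
    _ ≤ (y - 1) + (n - y) := sum_range_card_filter_le hk _ (fun d hd => (mem_Icc.1 hd).1) _ _
    _ ≤ n := by omega

theorem card_filter_not_disjoint_progressionPoints_le (hk : 2 ≤ k) (hq : q ∈ progressions k n) :
    #{r ∈ progressions k n | ¬Disjoint (progressionPoints k n q) (progressionPoints k n r)}
      ≤ k * n := by
  have hsub : {r ∈ progressions k n | ¬Disjoint (progressionPoints k n q) (progressionPoints k n r)}
      ⊆ (progressionPoints k n q).biUnion
          fun x => {r ∈ progressions k n | x ∈ progressionPoints k n r} := by
    intro r hr
    obtain ⟨hr, hqr⟩ := mem_filter.1 hr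
    obtain ⟨x, hxq, hxr⟩ := not_disjoint_iff.1 hqr
    exact mem_biUnion.2 ⟨x, hxq, mem_filter.2 ⟨hr, hxr⟩⟩
  calc _ ≤ _ := card_le_card hsub
    _ ≤ _ := card_biUnion_le
    _ ≤ #(progressionPoints k n q) * n :=
        sum_le_card_nsmul _ _ _ fun x _ => card_filter_mem_progressionPoints_le hk x
    _ = k * n := by rw [card_progressionPoints hq]

theorem card_monochromatic_progressionPoints (hk : 1 ≤ k) (hq : q ∈ progressions k n) :
    (#(monochromatic (progressionPoints k n q) : Finset (Fin (n + 1) → Bool)) : ℝ)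
      = 2 / 2 ^ k * Fintype.card (Fin (n + 1) → Bool) := by
  have hne : (progressionPoints k n q).Nonempty := by
    rw [← card_pos, card_progressionPoints hq]; omega
  have := card_monochromatic_mul_pow (β := Bool) hne
  rw [card_progressionPoints hq, Fintype.card_bool] at this
  rw [div_mul_eq_mul_div, eq_div_iff (by positivity)]
  exact_mod_cast this

end ArithmeticProgression

theorem exp_mul_two_div_two_pow_mul_le_one {k n : ℕ} (hk : 1 ≤ k)
    (hn : (n : ℝ) ≤ 2 ^ (k - 1) / (Real.exp 1 * k) - 1) :
    Real.exp 1 * (2 / 2 ^ k) * ((k * n : ℕ) + 1) ≤ 1 := by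
  have h2k : (2 : ℝ) ^ k = 2 * 2 ^ (k - 1) := by rw [← pow_succ']; congr 1; omega
  have hk' : (1 : ℝ) ≤ k := by exact_mod_cast hk
  have hn' : ((n : ℝ) + 1) * (Real.exp 1 * k) ≤ 2 ^ (k - 1) := by
    rw [← le_div_iff₀ (by positivity)]; linarith
  have he : 0 < Real.exp 1 := Real.exp_pos 1
  rw [h2k, div_mul_cancel_left₀ two_ne_zero, mul_right_comm, ← div_eq_mul_inv,
    div_le_one (by positivity)]
  push_cast
  nlinarith

/-- If `k ≥ 2` and `n ≤ 2^(k-1)/(e·k) - 1`, then there is a 2-coloring of `{1,…,n}`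
with no monochromatic `k`-term arithmetic progression. -/
theorem exists_coloring_no_mono_ap (k n : ℕ) (hk : 2 ≤ k)
    (hn : (n : ℝ) ≤ 2 ^ (k - 1) / (Real.exp 1 * k) - 1) :
    ∃ χ : ℕ → Bool, ∀ a d : ℕ, 1 ≤ a → 1 ≤ d → a + (k - 1) * d ≤ n →
      ¬ ∀ i : ℕ, i < k → χ (a + i * d) = χ a := by
  obtain ⟨f, hf⟩ := exists_forall_notMem_of_exp_mul_le (E := progressions k n)
    (B := fun q => monochromatic (progressionPoints k n q)) (T := progressionPoints k n)
    (fun q _ => dependsOn_mem_monochromatic _)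
    (fun q hq => (card_le_card (monotone_filter_right _ fun _ _ => And.right)).trans
      (card_filter_not_disjoint_progressionPoints_le hk hq))
    (fun q hq => (card_monochromatic_progressionPoints (by omega) hq).le)
    (exp_mul_two_div_two_pow_mul_le_one (by omega) hn)
  refine ⟨fun m => f (Fin.ofNat (n + 1) m), fun a d ha hd hlast hmono =>
    hf (a, d) ?_ (mem_monochromatic.2 ⟨f (Fin.ofNat (n + 1) a), fun x hx => ?_⟩)⟩
  · have := Nat.mul_le_mul_right d (by omega : 1 ≤ k - 1)
    exact mem_progressions.2 ⟨ha, hd, by omega, hlast⟩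
  · obtain ⟨i, hi, hx⟩ := mem_progressionPoints.1 hx
    have := hmono i hi
    rw [hx] at this
    simpa using this
end
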